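/- arXiv:1010.4612 — 2 statements merged into one kernel-verified Lean document; each statement's English description precedes it below -/
import Mathlib

section
/- Let x ∈ ℝ^N, let x_k be its best k-term approximation, let A be an n×N real matrix, and let y = Ax + e with ‖e‖₂ ≤ ε. Suppose there exists a real a with ak an integer, a > 1, such that the restricted isometry constants of A satisfy δ_{ak} + a·δ_{(a+1)k} < a − 1. Then any x* with ‖Ax* − y‖₂ ≤ ε and ‖x*‖₁ ≤ ‖x‖₁ satisfies ‖x* − x‖₂ ≤ C0·ε + C1·k^{−1/2}·‖x − x_k‖₁, where C0 = 2(1 + a^{−1/2})/(√(1−δ_{(a+1)k}) − a^{−1/2}·√(1+δ_{ak})) and C1 = 2a^{−1/2}(√(1−δ_{(a+1)k}) + √(1+δ_{ak}))/(√(1−δ_{(a+1)k}) − a^{−1/2}·√(1+δ_{ak})). (This is the ω = 1 specialization of the weighted ℓ1 recovery theorem, recovering the Candès–Romberg–Tao stability theorem.) -/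
open scoped BigOperators

noncomputable section

/-- The ℓ1 norm of a finite real vector. -/
def l1norm {ι : Type*} [Fintype ι] (v : ι → ℝ) : ℝ := ∑ i, |v i|

/-- The Euclidean (ℓ2) norm of a finite real vector. -/
def l2norm {ι : Type*} [Fintype ι] (v : ι → ℝ) : ℝ := Real.sqrt (∑ i, (v i) ^ 2)

/-- The ℓ∞ norm of a finite real vector. -/
def linfnorm {ι : Type*} [Fintype ι] (v : ι → ℝ) : ℝ := ⨆ i, |v i|

/-- The weighted ℓ1 norm `‖v‖_{1,w} = ∑ i, w i * |v i|`. -/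
def wl1norm {ι : Type*} [Fintype ι] (w v : ι → ℝ) : ℝ := ∑ i, w i * |v i|

/-- `restrict v S` is the vector equal to `v` on `S` and zero outside `S`. -/
def restrict {ι : Type*} [DecidableEq ι] (v : ι → ℝ) (S : Finset ι) : ι → ℝ :=
  fun i => if i ∈ S then v i else 0

/-- A vector is `m`-sparse if it has at most `m` nonzero entries. -/
def IsSparse {ι : Type*} [Fintype ι] (m : ℕ) (v : ι → ℝ) : Prop :=
  (Finset.univ.filter (fun i => v i ≠ 0)).card ≤ m

/-- The restricted isometry constant `δ_m` of a matrix `A`: the smallest `δ ≥ 0` such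
that `(1-δ)‖u‖₂² ≤ ‖Au‖₂² ≤ (1+δ)‖u‖₂²` for every `m`-sparse vector `u`. -/
def ripConst {n N : ℕ} (A : Matrix (Fin n) (Fin N) ℝ) (m : ℕ) : ℝ :=
  sInf {δ : ℝ | 0 ≤ δ ∧ ∀ u : Fin N → ℝ, IsSparse m u →
    (1 - δ) * (∑ i, (u i) ^ 2) ≤ (∑ j, (A.mulVec u j) ^ 2) ∧
    (∑ j, (A.mulVec u j) ^ 2) ≤ (1 + δ) * (∑ i, (u i) ^ 2)}

end

/-!
Let `h = xs - x`. Minimality of `‖xs‖₁` puts `h` in the cone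
`‖h_{T0ᶜ}‖₁ ≤ ‖h_{T0}‖₁ + 2‖x - xk‖₁`. Cut `T0ᶜ` into consecutive blocks `T1, T2, …` of the `ak`
largest remaining entries of `h`; each block is dominated entrywise by the previous one, so
`∑_{j ≥ 2} ‖h_{Tj}‖₂ ≤ (ak)^{-1/2} ‖h_{T0ᶜ}‖₁ ≤ a^{-1/2} ‖h_{T0 ∪ T1}‖₂ + 2 (ak)^{-1/2} ‖x - xk‖₁`.
The lower RIP bound on `T0 ∪ T1`, the upper one on each `Tj` and `‖Ah‖₂ ≤ 2ε` give
`√(1 - δ_{(a+1)k}) ‖h_{T0 ∪ T1}‖₂ ≤ 2ε + √(1 + δ_{ak}) ∑_{j ≥ 2} ‖h_{Tj}‖₂`, and the RIP condition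
is exactly `a^{-1/2} √(1 + δ_{ak}) < √(1 - δ_{(a+1)k})`, so this can be solved for `‖h_{T0 ∪ T1}‖₂`;
finally `‖h‖₂ ≤ ‖h_{T0 ∪ T1}‖₂ + ∑_{j ≥ 2} ‖h_{Tj}‖₂`.
-/

open Finset hiding restrict
open Matrix

theorem sum_abs_le_sqrt_card_mul_sqrt {ι : Type*} (v : ι → ℝ) (U : Finset ι) :
    ∑ i ∈ U, |v i| ≤ √U.card * √(∑ i ∈ U, v i ^ 2) := by
  rw [← Real.sqrt_mul (Nat.cast_nonneg _)]
  refine (le_abs_self _).trans (Real.abs_le_sqrt ?_)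
  simpa only [sq_abs] using sq_sum_le_card_mul_sum_sq (s := U) (f := fun i => |v i|)

section Vectors

variable {ι : Type*}

theorem l2norm_eq_norm [Fintype ι] (v : ι → ℝ) :
    l2norm v = ‖(WithLp.toLp 2 v : EuclideanSpace ℝ ι)‖ := by
  simp [l2norm, EuclideanSpace.norm_eq]

theorem l2norm_add_le [Fintype ι] (u v : ι → ℝ) : l2norm (u + v) ≤ l2norm u + l2norm v := by
  simpa only [l2norm_eq_norm, WithLp.toLp_add] using norm_add_le _ _

theorem l2norm_sub_le [Fintype ι] (u v : ι → ℝ) : l2norm (u - v) ≤ l2norm u + l2norm v := by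
  simpa only [l2norm_eq_norm, WithLp.toLp_sub] using norm_sub_le _ _

theorem l2norm_list_sum_le [Fintype ι] (l : List (ι → ℝ)) :
    l2norm l.sum ≤ (l.map l2norm).sum := by
  induction l with
  | nil => simp [l2norm]
  | cons v l ih =>
    simpa only [List.sum_cons, List.map_cons] using (l2norm_add_le v l.sum).trans (by linarith)

theorem l2norm_restrict [Fintype ι] [DecidableEq ι] (v : ι → ℝ) (U : Finset ι) :
    l2norm (restrict v U) = √(∑ i ∈ U, v i ^ 2) := by
  simp [l2norm, restrict, ite_pow, sum_ite_mem]

theorem restrict_add_restrict_sdiff [DecidableEq ι] (v : ι → ℝ) {U V : Finset ι}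
    (hUV : U ⊆ V) :
    restrict v U + restrict v (V \ U) = restrict v V := by
  funext i
  by_cases hU : i ∈ U
  · simp [restrict, hU, hUV hU]
  · by_cases hV : i ∈ V <;> simp [restrict, hU, hV]

theorem isSparse_restrict [Fintype ι] [DecidableEq ι] (v : ι → ℝ) {U : Finset ι} {m : ℕ}
    (hU : U.card ≤ m) :
    IsSparse m (restrict v U) := by
  refine (card_le_card fun i hi => ?_).trans hU
  by_contra hiU
  simp [restrict, hiU] at hi

theorem l1norm_sub_restrict [Fintype ι] [DecidableEq ι] (v : ι → ℝ) (U : Finset ι) :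
    l1norm (v - restrict v U) = ∑ i ∈ Uᶜ, |v i| := by
  rw [l1norm, ← sum_add_sum_compl U, sum_eq_zero fun i hi => by simp [restrict, hi], zero_add]
  exact sum_congr rfl fun i hi => by simp [restrict, mem_compl.1 hi]

theorem sum_compl_abs_sub_le [Fintype ι] [DecidableEq ι] (x xs : ι → ℝ) (T : Finset ι)
    (hopt : l1norm xs ≤ l1norm x) :
    ∑ i ∈ Tᶜ, |(xs - x) i| ≤ ∑ i ∈ T, |(xs - x) i| + 2 * ∑ i ∈ Tᶜ, |x i| := by
  have hT : ∑ i ∈ T, (|x i| - |(xs - x) i|) ≤ ∑ i ∈ T, |xs i| :=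
    sum_le_sum fun i _ => by
      simp only [Pi.sub_apply]
      linarith [abs_sub_abs_le_abs_sub (x i) (xs i), abs_sub_comm (x i) (xs i)]
  have hTc : ∑ i ∈ Tᶜ, (|(xs - x) i| - |x i|) ≤ ∑ i ∈ Tᶜ, |xs i| :=
    sum_le_sum fun i _ => by
      simp only [Pi.sub_apply]
      linarith [abs_sub (xs i) (x i)]
  rw [sum_sub_distrib] at hT hTc
  have := sum_add_sum_compl T fun i => |x i|
  have := sum_add_sum_compl T fun i => |xs i|
  rw [l1norm, l1norm] at hopt
  linarith

end Vectors

section RIP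

variable {n N : ℕ} (A : Matrix (Fin n) (Fin N) ℝ)

def IsRIPBound (m : ℕ) (δ : ℝ) : Prop :=
  0 ≤ δ ∧ ∀ u : Fin N → ℝ, IsSparse m u →
    (1 - δ) * (∑ i, (u i) ^ 2) ≤ (∑ j, (A.mulVec u j) ^ 2) ∧
    (∑ j, (A.mulVec u j) ^ 2) ≤ (1 + δ) * (∑ i, (u i) ^ 2)

theorem sum_mulVec_sq_le (u : Fin N → ℝ) :
    ∑ j, (A *ᵥ u) j ^ 2 ≤ (∑ j, ∑ i, A j i ^ 2) * ∑ i, u i ^ 2 := by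
  rw [sum_mul]
  exact sum_le_sum fun j _ => sum_mul_sq_le_sq_mul_sq univ (A j) u

theorem isRIPBound_ripConst (m : ℕ) : IsRIPBound A m (ripConst A m) := by
  have hclosed : IsClosed {δ | IsRIPBound A m δ} := by
    simp only [IsRIPBound, Set.ofPred_and, Set.ofPred_forall]
    exact (isClosed_le continuous_const continuous_id).inter <| isClosed_iInter fun u =>
      isClosed_iInter fun _ => (isClosed_le (by fun_prop) continuous_const).inter
        (isClosed_le continuous_const (by fun_prop))
  have hne : {δ | IsRIPBound A m δ}.Nonempty := by
    have hA : 0 ≤ ∑ j, ∑ i, A j i ^ 2 := by positivity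
    refine ⟨1 + ∑ j, ∑ i, A j i ^ 2, by positivity, fun u _ => ⟨?_, ?_⟩⟩
    · nlinarith [sum_nonneg fun i (_ : i ∈ univ) => sq_nonneg (u i),
        sum_nonneg fun j (_ : j ∈ univ) => sq_nonneg ((A *ᵥ u) j)]
    · nlinarith [sum_mulVec_sq_le A u, sum_nonneg fun i (_ : i ∈ univ) => sq_nonneg (u i)]
  exact hclosed.csInf_mem hne ⟨0, fun _ hδ => hδ.1⟩

theorem ripConst_nonneg (m : ℕ) : 0 ≤ ripConst A m :=
  (isRIPBound_ripConst A m).1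

theorem sqrt_one_sub_ripConst_mul_le {m : ℕ} {u : Fin N → ℝ} (hu : IsSparse m u) :
    √(1 - ripConst A m) * l2norm u ≤ l2norm (A *ᵥ u) := by
  rw [l2norm, ← Real.sqrt_mul' _ (by positivity)]
  exact Real.sqrt_le_sqrt ((isRIPBound_ripConst A m).2 u hu).1

theorem l2norm_mulVec_le {m : ℕ} {u : Fin N → ℝ} (hu : IsSparse m u) :
    l2norm (A *ᵥ u) ≤ √(1 + ripConst A m) * l2norm u := by
  rw [l2norm, l2norm, ← Real.sqrt_mul' _ (by positivity)]
  exact Real.sqrt_le_sqrt ((isRIPBound_ripConst A m).2 u hu).2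

theorem l2norm_mulVec_list_sum_le {m : ℕ} {l : List (Fin N → ℝ)}
    (hl : ∀ v ∈ l, IsSparse m v) :
    l2norm (A *ᵥ l.sum) ≤ √(1 + ripConst A m) * (l.map l2norm).sum := by
  induction l with
  | nil => simp [l2norm]
  | cons v l ih =>
    rw [List.forall_mem_cons] at hl
    rw [List.sum_cons, Matrix.mulVec_add, List.map_cons, List.sum_cons, mul_add]
    exact (l2norm_add_le _ _).trans (add_le_add (l2norm_mulVec_le A hl.1) (ih hl.2))

end RIP

section Blocks

variable {ι : Type*} [DecidableEq ι]

theorem exists_top_subset {α : Type*} [LinearOrder α] (f : ι → α) (S : Finset ι) (M : ℕ) :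
    ∃ T ⊆ S, T.card = min M S.card ∧ ∀ i ∈ T, ∀ j ∈ S \ T, f j ≤ f i := by
  induction M with
  | zero => exact ⟨∅, empty_subset _, by simp, by simp⟩
  | succ M ih =>
    obtain ⟨T, hTS, hcard, htop⟩ := ih
    rcases (S \ T).eq_empty_or_nonempty with hempty | hne
    · have := card_le_card (sdiff_eq_empty_iff_subset.mp hempty)
      exact ⟨T, hTS, by omega, by simp [hempty]⟩
    · obtain ⟨j, hj, hjmax⟩ := exists_max_image (S \ T) f hne
      rw [mem_sdiff] at hj
      have := card_lt_card (ssubset_of_subset_of_ne hTS fun h => hj.2 (h ▸ hj.1))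
      refine ⟨insert j T, insert_subset hj.1 hTS, ?_, ?_⟩
      · rw [card_insert_of_notMem hj.2]
        omega
      · intro i hi j' hj'
        simp only [mem_sdiff, mem_insert, not_or] at hj'
        rcases mem_insert.1 hi with rfl | hi
        · exact hjmax j' (mem_sdiff.2 ⟨hj'.1, hj'.2.2⟩)
        · exact htop i hi j' (mem_sdiff.2 ⟨hj'.1, hj'.2.2⟩)

theorem l2norm_restrict_le [Fintype ι] (h : ι → ℝ) {T T' : Finset ι} {M : ℕ} (hM : 0 < M)
    (hT : T.card = M) (hT' : T'.card ≤ M) (hle : ∀ j ∈ T', ∀ i ∈ T, |h j| ≤ |h i|) :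
    l2norm (restrict h T') ≤ (√M)⁻¹ * ∑ i ∈ T, |h i| := by
  set L := ∑ i ∈ T, |h i|
  have hM' : (0 : ℝ) < M := Nat.cast_pos.2 hM
  have hj : ∀ j ∈ T', |h j| ≤ L / M := fun j hj => by
    rw [le_div_iff₀ hM']
    calc |h j| * M = ∑ _i ∈ T, |h j| := by simp [hT, mul_comm]
      _ ≤ L := sum_le_sum (hle j hj)
  rw [l2norm_restrict, Real.sqrt_le_left (by positivity)]
  calc ∑ j ∈ T', h j ^ 2 ≤ ∑ _j ∈ T', (L / M) ^ 2 :=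
        sum_le_sum fun j hj' => by
          rw [← sq_abs]; exact pow_le_pow_left₀ (abs_nonneg _) (hj j hj') 2
    _ = T'.card * (L / M) ^ 2 := by simp
    _ ≤ M * (L / M) ^ 2 := by gcongr
    _ = ((√M)⁻¹ * L) ^ 2 := by
      rw [mul_pow, inv_pow, Real.sq_sqrt hM'.le]; field_simp

/-- Strong induction on `S`: the next block, the `M` largest entries of `h` on `S \ T`, is
dominated entrywise by the full block `T` (`l2norm_restrict_le`). -/
theorem exists_sparse_decomposition [Fintype ι] (h : ι → ℝ) {M : ℕ} (hM : 0 < M)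
    (S T : Finset ι) (hTS : T ⊆ S) (hT : T.card = min M S.card)
    (htop : ∀ i ∈ T, ∀ j ∈ S \ T, |h j| ≤ |h i|) :
    ∃ l : List (ι → ℝ), (∀ v ∈ l, IsSparse M v) ∧ restrict h (S \ T) = l.sum ∧
      (l.map l2norm).sum ≤ (√M)⁻¹ * ∑ i ∈ S, |h i| := by
  induction S using Finset.strongInduction generalizing T with
  | H S ih =>
    rcases (S \ T).eq_empty_or_nonempty with hempty | hne
    · refine ⟨[], by simp, ?_, by simp; positivity⟩
      funext i
      simp [hempty, restrict]
    · obtain ⟨j, hj⟩ := hne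
      rw [mem_sdiff] at hj
      have hlt := card_lt_card (ssubset_of_subset_of_ne hTS fun h => hj.2 (h ▸ hj.1))
      have hTM : T.card = M := by omega
      have hTne : T.Nonempty := card_pos.1 (hTM ▸ hM)
      obtain ⟨T', hT'S, hT'card, hT'top⟩ := exists_top_subset (fun i => |h i|) (S \ T) M
      obtain ⟨l, hl_sparse, hl_sum, hl_norm⟩ :=
        ih (S \ T) (sdiff_ssubset hTS hTne) T' hT'S hT'card hT'top
      have hT'M : T'.card ≤ M := hT'card.trans_le (min_le_left _ _)
      refine ⟨restrict h T' :: l, ?_, ?_, ?_⟩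
      · exact List.forall_mem_cons.2 ⟨isSparse_restrict h hT'M, hl_sparse⟩
      · rw [List.sum_cons, ← hl_sum, restrict_add_restrict_sdiff h hT'S]
      · have hblock : l2norm (restrict h T') ≤ (√M)⁻¹ * ∑ i ∈ T, |h i| :=
          l2norm_restrict_le h hM hTM hT'M fun j hj i hi => htop i hi j (hT'S hj)
        rw [List.map_cons, List.sum_cons, ← sum_sdiff hTS, mul_add]
        linarith

end Blocks

/-- Here `t = ‖h_{T0 ∪ T1}‖₂` with `T1` the `M` largest entries of `h` off `T0`, and `τ` is the
sum of the `ℓ2` norms of the further `M`-blocks. -/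
theorem exists_rip_estimate {n N : ℕ} (A : Matrix (Fin n) (Fin N) ℝ) (h : Fin N → ℝ)
    {T0 : Finset (Fin N)} {k M : ℕ} (hT0 : T0.card ≤ k) (hM : 0 < M) :
    ∃ t τ : ℝ, ∑ i ∈ T0, |h i| ≤ √k * t ∧ τ ≤ (√M)⁻¹ * ∑ i ∈ T0ᶜ, |h i| ∧
      l2norm h ≤ t + τ ∧
      √(1 - ripConst A (M + k)) * t ≤ l2norm (A *ᵥ h) + √(1 + ripConst A M) * τ := by
  obtain ⟨T1, hT1, hT1card, hT1top⟩ := exists_top_subset (fun i => |h i|) T0ᶜ M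
  obtain ⟨l, hl_sparse, hl_sum, hl_norm⟩ :=
    exists_sparse_decomposition h hM T0ᶜ T1 hT1 hT1card hT1top
  have hsplit : restrict h (T0 ∪ T1) + l.sum = h := by
    have hcompl : T0ᶜ \ T1 = univ \ (T0 ∪ T1) := by ext; simp
    rw [← hl_sum, hcompl, restrict_add_restrict_sdiff h (subset_univ _)]
    funext i; simp [restrict]
  have hcard : (T0 ∪ T1).card ≤ M + k :=
    (card_union_le _ _).trans (by have := hT1card.trans_le (min_le_left _ _); omega)
  refine ⟨l2norm (restrict h (T0 ∪ T1)), (l.map l2norm).sum, ?_, hl_norm, ?_, ?_⟩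
  · calc ∑ i ∈ T0, |h i| ≤ √T0.card * √(∑ i ∈ T0, h i ^ 2) := sum_abs_le_sqrt_card_mul_sqrt h T0
      _ ≤ √k * l2norm (restrict h (T0 ∪ T1)) := by
        rw [l2norm_restrict]
        gcongr
        exact subset_union_left
  · calc l2norm h = l2norm (restrict h (T0 ∪ T1) + l.sum) := by rw [hsplit]
      _ ≤ _ := (l2norm_add_le _ _).trans (add_le_add_right (l2norm_list_sum_le l) _)
  · have hmul : A *ᵥ restrict h (T0 ∪ T1) = A *ᵥ h - A *ᵥ l.sum := by
      rw [eq_sub_iff_add_eq, ← mulVec_add, hsplit]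
    calc √(1 - ripConst A (M + k)) * l2norm (restrict h (T0 ∪ T1))
        ≤ l2norm (A *ᵥ restrict h (T0 ∪ T1)) :=
          sqrt_one_sub_ripConst_mul_le A (isSparse_restrict h hcard)
      _ ≤ l2norm (A *ᵥ h) + l2norm (A *ᵥ l.sum) := hmul ▸ l2norm_sub_le _ _
      _ ≤ _ := add_le_add_right (l2norm_mulVec_list_sum_le A hl_sparse) _

theorem le_of_rip_estimate {b c σ t τ ε κ ρ H : ℝ} (hD : σ * c < b) (hσ : 0 ≤ σ) (hc : 0 ≤ c)
    (ht : b * t ≤ 2 * ε + c * τ) (hτ : τ ≤ σ * t + 2 * σ * κ * ρ) (hH : H ≤ t + τ) :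
    H ≤ 2 * (1 + σ) / (b - σ * c) * ε + 2 * σ * (b + c) / (b - σ * c) * κ * ρ := by
  have hD' : 0 < b - σ * c := by linarith
  have hDt : (b - σ * c) * t ≤ 2 * ε + 2 * c * σ * κ * ρ := by
    nlinarith [mul_le_mul_of_nonneg_left hτ hc]
  rw [div_mul_eq_mul_div, div_mul_eq_mul_div, div_mul_eq_mul_div, ← add_div, le_div_iff₀ hD']
  nlinarith [mul_le_mul_of_nonneg_left hDt (by linarith : (0 : ℝ) ≤ 1 + σ),
    mul_le_mul_of_nonneg_left (hH.trans (add_le_add_right hτ t)) hD'.le]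

theorem inv_sqrt_mul_sqrt_lt_sqrt {a δ δ' : ℝ} (ha : 0 < a) (hδ : 0 ≤ δ)
    (h : δ + a * δ' < a - 1) : (√a)⁻¹ * √(1 + δ) < √(1 - δ') := by
  have hlt : √(1 + δ) < √a * √(1 - δ') := by
    rw [← Real.sqrt_mul ha.le]
    exact Real.sqrt_lt_sqrt (by linarith) (by linarith)
  rwa [inv_mul_lt_iff₀ (Real.sqrt_pos.2 ha)]

theorem l1_recovery_general
    {n N : ℕ} (A : Matrix (Fin n) (Fin N) ℝ)
    (x : Fin N → ℝ) (e : Fin n → ℝ) (y : Fin n → ℝ)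
    (k ak : ℕ) (a ε : ℝ)
    (T0 : Finset (Fin N)) (xk : Fin N → ℝ)
    (hk : 1 ≤ k)
    -- `xk` is the best `k`-term approximation of `x`, supported on `T0` with `|T0| = k`
    (hT0card : T0.card = k)
    (hxk : xk = restrict x T0)
    -- `a` is a real number with `ak` an integer and `a > 1`
    (hak : (ak : ℝ) = a * k)
    (ha : 1 < a)
    -- RIP condition: `δ_{ak} + a δ_{(a+1)k} < a - 1`
    (hRIP : ripConst A ak + a * ripConst A (ak + k) < a - 1)
    -- measurements `y = Ax + e` with `‖e‖₂ ≤ ε`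
    (hy : y = A.mulVec x + e)
    (he : l2norm e ≤ ε)
    -- `xs` is any solution of the ℓ1 problem
    (xs : Fin N → ℝ)
    (hfeas : l2norm (A.mulVec xs - y) ≤ ε)
    (hopt : l1norm xs ≤ l1norm x) :
    l2norm (xs - x) ≤
      (2 * (1 + (Real.sqrt a)⁻¹) /
          (Real.sqrt (1 - ripConst A (ak + k)) -
            (Real.sqrt a)⁻¹ * Real.sqrt (1 + ripConst A ak))) * ε
      + (2 * (Real.sqrt a)⁻¹ * (Real.sqrt (1 - ripConst A (ak + k)) +
            Real.sqrt (1 + ripConst A ak)) /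
          (Real.sqrt (1 - ripConst A (ak + k)) -
            (Real.sqrt a)⁻¹ * Real.sqrt (1 + ripConst A ak)))
        * (k : ℝ) ^ (-(1 / 2 : ℝ)) * l1norm (x - xk) := by
  have hk0 : (0 : ℝ) < k := by exact_mod_cast hk
  have hM : 0 < ak := by exact_mod_cast (hak ▸ mul_pos (by linarith) hk0 : (0 : ℝ) < ak)
  obtain ⟨t, τ, hT0t, hτ, hnorm, hrip⟩ := exists_rip_estimate A (xs - x) hT0card.le hM
  have hAh : l2norm (A *ᵥ (xs - x)) ≤ 2 * ε := by
    have : A *ᵥ (xs - x) = (A *ᵥ xs - y) + e := by rw [hy, mulVec_sub]; abel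
    rw [this]
    linarith [l2norm_add_le (A *ᵥ xs - y) e]
  have hcone := sum_compl_abs_sub_le x xs T0 hopt
  have hρ : l1norm (x - xk) = ∑ i ∈ T0ᶜ, |x i| := hxk ▸ l1norm_sub_restrict x T0
  rw [← hρ] at hcone
  have hτ' : τ ≤ (√a)⁻¹ * t + 2 * (√a)⁻¹ * (k : ℝ) ^ (-(1 / 2 : ℝ)) * l1norm (x - xk) := by
    have hsqrt : (k : ℝ) ^ (-(1 / 2 : ℝ)) = (√k)⁻¹ := by
      rw [Real.rpow_neg hk0.le, Real.sqrt_eq_rpow]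
    calc τ ≤ (√ak)⁻¹ * (√k * t + 2 * l1norm (x - xk)) := hτ.trans (by gcongr; linarith)
      _ = _ := by
        rw [hsqrt, hak, Real.sqrt_mul (by linarith)]
        field_simp
  exact le_of_rip_estimate (inv_sqrt_mul_sqrt_lt_sqrt (by linarith) (ripConst_nonneg A ak) hRIP)
    (by positivity) (Real.sqrt_nonneg _) (hrip.trans (by linarith)) hτ' hnorm

/-- Candès–Romberg–Tao stability theorem, ω = 1 case: stable and robust
recovery of an arbitrary signal from noisy measurements via ℓ1 minimization. -/
theorem l1_recovery
    {n N : ℕ} (A : Matrix (Fin n) (Fin N) ℝ)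
    (x : Fin N → ℝ) (e : Fin n → ℝ) (y : Fin n → ℝ)
    (k ak : ℕ) (a ε : ℝ)
    (T0 : Finset (Fin N)) (xk : Fin N → ℝ)
    (hk : 1 ≤ k)
    -- `xk` is the best `k`-term approximation of `x`, supported on `T0` with `|T0| = k`
    (hT0card : T0.card = k)
    (hxk : xk = restrict x T0)
    (hbest : ∀ i ∈ T0, ∀ j ∉ T0, |x j| ≤ |x i|)
    -- `a` is a real number with `ak` an integer and `a > 1`
    (hak : (ak : ℝ) = a * k)
    (ha : 1 < a)
    -- RIP condition: `δ_{ak} + a δ_{(a+1)k} < a - 1`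
    (hRIP : ripConst A ak + a * ripConst A (ak + k) < a - 1)
    -- measurements `y = Ax + e` with `‖e‖₂ ≤ ε`
    (hy : y = A.mulVec x + e)
    (he : l2norm e ≤ ε)
    -- `xs` is any solution of the ℓ1 problem
    (xs : Fin N → ℝ)
    (hfeas : l2norm (A.mulVec xs - y) ≤ ε)
    (hopt : l1norm xs ≤ l1norm x) :
    l2norm (xs - x) ≤
      (2 * (1 + (Real.sqrt a)⁻¹) /
          (Real.sqrt (1 - ripConst A (ak + k)) -
            (Real.sqrt a)⁻¹ * Real.sqrt (1 + ripConst A ak))) * ε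
      + (2 * (Real.sqrt a)⁻¹ * (Real.sqrt (1 - ripConst A (ak + k)) +
            Real.sqrt (1 + ripConst A ak)) /
          (Real.sqrt (1 - ripConst A (ak + k)) -
            (Real.sqrt a)⁻¹ * Real.sqrt (1 + ripConst A ak)))
        * (k : ℝ) ^ (-(1 / 2 : ℝ)) * l1norm (x - xk) :=
  l1_recovery_general A x e y k ak a ε T0 xk hk hT0card hxk hak ha hRIP hy he xs hfeas hopt
end

section
/- Let x, h ∈ ℝ^N, let T0, T̃ ⊆ {1,…,N}, let T̃_α = T0 ∩ T̃, and let 0 ≤ ω ≤ 1. Define weights w_i = ω for i ∈ T̃ and w_i = 1 for i ∈ T̃ᶜ. If ‖x + h‖_{1,w} ≤ ‖x‖_{1,w}, then ‖h_{T0ᶜ}‖₁ ≤ ω·‖h_{T0}‖₁ + (1−ω)·‖h_{(T0 ∪ T̃)∖T̃_α}‖₁ + 2·(ω·‖x_{T0ᶜ}‖₁ + (1−ω)·‖x_{T̃ᶜ∩T0ᶜ}‖₁). -/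
open scoped BigOperators

/-! For any nonnegative weights, the triangle inequality applied coordinatewise turns the cone
condition into `‖h_{T0ᶜ}‖_{1,w} ≤ ‖h_{T0}‖_{1,w} + 2‖x_{T0ᶜ}‖_{1,w}`. For the two-level weight,
`w = ω + (1 - ω)·1_{T̃ᶜ}`, so `‖v‖_{1,w} = ω‖v‖₁ + (1 - ω)‖v_{T̃ᶜ}‖₁`; adding
`(1 - ω)‖h_{T̃ ∩ T0ᶜ}‖₁` to both sides gives the bound. -/

section Restrict

variable {ι : Type*} [DecidableEq ι]

theorem restrict_restrict (v : ι → ℝ) (A B : Finset ι) :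
    restrict (restrict v A) B = restrict v (B ∩ A) := by
  ext i
  simp only [restrict, Finset.mem_inter, ite_and]

variable [Fintype ι]

theorem l1norm_restrict (v : ι → ℝ) (S : Finset ι) :
    l1norm (restrict v S) = ∑ i ∈ S, |v i| := by
  simp only [l1norm, restrict, apply_ite, abs_zero, Finset.sum_ite_mem, Finset.univ_inter]

theorem l1norm_restrict_union {A B : Finset ι} (hAB : Disjoint A B) (v : ι → ℝ) :
    l1norm (restrict v (A ∪ B)) = l1norm (restrict v A) + l1norm (restrict v B) := by
  simp only [l1norm_restrict, Finset.sum_union hAB]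

theorem wl1norm_restrict_compl_le {w : ι → ℝ} (hw : ∀ i, 0 ≤ w i) (x h : ι → ℝ)
    (S : Finset ι) :
    wl1norm w (restrict h Sᶜ) ≤ wl1norm w (restrict h S) + 2 * wl1norm w (restrict x Sᶜ)
      + (wl1norm w (x + h) - wl1norm w x) := by
  simp only [wl1norm, Finset.mul_sum, ← Finset.sum_sub_distrib, ← Finset.sum_add_distrib]
  refine Finset.sum_le_sum fun i _ => ?_
  have hxh : |x i| ≤ |h i| + |x i + h i| := by
    simpa using abs_sub_le (x i) (x i + h i) 0
  have hhx : |h i| ≤ |x i| + |x i + h i| := by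
    simpa [abs_neg] using abs_sub_le (h i) (x i + h i) 0
  by_cases hi : i ∈ S
  · simp only [restrict, Finset.mem_compl, hi, not_true_eq_false, if_false, if_true,
      abs_zero, mul_zero, Pi.add_apply]
    nlinarith [hw i]
  · simp only [restrict, Finset.mem_compl, hi, not_false_eq_true, if_false, if_true,
      abs_zero, mul_zero, Pi.add_apply]
    nlinarith [hw i]

theorem wl1norm_eq_of_eq_ite {w : ι → ℝ} {T : Finset ι} {ω : ℝ}
    (hw : ∀ i, w i = if i ∈ T then ω else 1) (v : ι → ℝ) :
    wl1norm w v = ω * l1norm v + (1 - ω) * l1norm (restrict v Tᶜ) := by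
  simp only [wl1norm, l1norm, Finset.mul_sum, ← Finset.sum_add_distrib]
  refine Finset.sum_congr rfl fun i _ => ?_
  by_cases hi : i ∈ T
  · simp only [restrict, hw, hi, Finset.mem_compl, not_true_eq_false, if_true, if_false,
      abs_zero]
    ring
  · simp only [restrict, hw, hi, Finset.mem_compl, not_false_eq_true, if_true, if_false]
    ring

end Restrict

theorem weighted_cone_hT0c_bound_general
    {N : ℕ} (x h : Fin N → ℝ) (T0 Tt : Finset (Fin N)) (ω : ℝ) (w : Fin N → ℝ)
    (hω0 : 0 ≤ ω)
    (hw : ∀ i, w i = if i ∈ Tt then ω else 1)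
    (hcone : wl1norm w (x + h) ≤ wl1norm w x) :
    l1norm (restrict h T0ᶜ) ≤
      ω * l1norm (restrict h T0)
        + (1 - ω) * l1norm (restrict h ((T0 ∪ Tt) \ (T0 ∩ Tt)))
        + 2 * (ω * l1norm (restrict x T0ᶜ) + (1 - ω) * l1norm (restrict x (Ttᶜ ∩ T0ᶜ))) := by
  have hw_nonneg : ∀ i, 0 ≤ w i := fun i => by
    rw [hw i]; split_ifs <;> linarith
  have hcompl : l1norm (restrict h T0ᶜ) =
      l1norm (restrict h (Ttᶜ ∩ T0ᶜ)) + l1norm (restrict h (Tt ∩ T0ᶜ)) := by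
    rw [← l1norm_restrict_union
      (disjoint_compl_left.mono Finset.inter_subset_left Finset.inter_subset_left)]
    congr 2
    ext i
    simp only [Finset.mem_compl, Finset.mem_inter, Finset.mem_union]
    tauto
  have hsymm : l1norm (restrict h ((T0 ∪ Tt) \ (T0 ∩ Tt))) =
      l1norm (restrict h (Ttᶜ ∩ T0)) + l1norm (restrict h (Tt ∩ T0ᶜ)) := by
    rw [← l1norm_restrict_union
      (disjoint_compl_left.mono Finset.inter_subset_left Finset.inter_subset_left)]
    congr 2
    ext i
    simp only [Finset.mem_compl, Finset.mem_inter, Finset.mem_union, Finset.mem_sdiff]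
    tauto
  have hweighted := wl1norm_restrict_compl_le hw_nonneg x h T0
  rw [wl1norm_eq_of_eq_ite hw (restrict h T0ᶜ), wl1norm_eq_of_eq_ite hw (restrict h T0),
    wl1norm_eq_of_eq_ite hw (restrict x T0ᶜ)] at hweighted
  simp only [restrict_restrict] at hweighted
  rw [hsymm]
  linear_combination hweighted + hcone + (1 - ω) * hcompl

/-- the weighted ℓ1 cone constraint implies the bound (9) of the paper on
`‖h_{T0ᶜ}‖₁`, where `T̃_α = T0 ∩ T̃`. -/
theorem weighted_cone_hT0c_bound
    {N : ℕ} (x h : Fin N → ℝ) (T0 Tt : Finset (Fin N)) (ω : ℝ) (w : Fin N → ℝ)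
    (hω0 : 0 ≤ ω) (hω1 : ω ≤ 1)
    (hw : ∀ i, w i = if i ∈ Tt then ω else 1)
    (hcone : wl1norm w (x + h) ≤ wl1norm w x) :
    l1norm (restrict h T0ᶜ) ≤
      ω * l1norm (restrict h T0)
        + (1 - ω) * l1norm (restrict h ((T0 ∪ Tt) \ (T0 ∩ Tt)))
        + 2 * (ω * l1norm (restrict x T0ᶜ) + (1 - ω) * l1norm (restrict x (Ttᶜ ∩ T0ᶜ))) :=
  weighted_cone_hT0c_bound_general x h T0 Tt ω w hω0 hw hcone
end
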